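/- Let o be a noetherian commutative ring, F a nonarchimedean local field, B the upper triangular subgroup of GL(2,F). Let 0 -> V' -> V -> V'' -> 0 be an exact sequence of smooth representations of B over o with V' of finite type over o[B] and V of finite presentation relative to B_0 Z. Let ind_{B_0 Z}^B(V_0) -> V be a finite presentation of V with V_0 an o[B_0 Z]-submodule of V, such that in the induced exact sequence 0 -> V_0' -> V_0 -> V_0'' -> 0 of o[B_0 Z]-modules (V_0' := V_0 ∩ V', V_0'' the image of V_0 in V'') the submodule V_0' generates V' over o[B]. Then, writing f : V' -> V for the inclusion, there exists an o[B_0 Z]-submodule N of V, finitely generated over o[B_0 Z], such that <B^+ V_0> ∩ f(V') is contained in f(<B^+ V_0'>) + N; consequently the sequence 0 -> <B^+ V_0'> -> <B^+ V_0> -> <B^+ V_0''> -> 0 is exact modulo finitely generated o[B_0 Z]-modules. -/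

import Mathlib

noncomputable section
attribute [local instance] Classical.propDecidable
open Pointwise


/-! ### Generalities on smooth representations over a commutative ring `o` -/

section RepPrelim

variable (o : Type) [CommRing o]

/-- The `o`-submodule of `V` generated by `{s • w | s ∈ S, w ∈ W}`; written `<S W>` in the paper. -/
def gspan {H : Type} (V : Type) [AddCommGroup V] [Module o V] [SMul H V]
    (S : Set H) (W : Set V) : Submodule o V :=
  Submodule.span o {v : V | ∃ s ∈ S, ∃ w ∈ W, v = s • w}

/-- A submodule `N` is stable under the set `S` of group elements. -/
def IsStableSub {H : Type} (V : Type) [AddCommGroup V] [Module o V] [SMul H V]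
    (S : Set H) (N : Submodule o V) : Prop :=
  ∀ s ∈ S, ∀ v ∈ N, s • v ∈ N

/-- `N` is a finitely generated module over `o[S]`. -/
def IsFGOver {H : Type} (V : Type) [AddCommGroup V] [Module o V] [SMul H V]
    (S : Set H) (N : Submodule o V) : Prop :=
  ∃ X : Finset V, (X : Set V) ⊆ (N : Set V) ∧ N = gspan o V S (X : Set V)

/-- The submodule of `S`-invariants. -/
def invariantsSub (H : Type) [Group H] (V : Type) [AddCommGroup V] [Module o V]
    [DistribMulAction H V] [SMulCommClass H o V] (S : Set H) : Submodule o V where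
  carrier := {v | ∀ s ∈ S, s • v = v}
  add_mem' := by intro a b ha hb s hs; rw [smul_add, ha s hs, hb s hs]
  zero_mem' := by intro s hs; exact smul_zero s
  smul_mem' := by intro c v hv s hs; rw [smul_comm, hv s hs]

/-- The action of a fixed group element as an `o`-linear map. -/
def actLin (H : Type) [Group H] (V : Type) [AddCommGroup V] [Module o V]
    [DistribMulAction H V] [SMulCommClass H o V] (g : H) : V →ₗ[o] V where
  toFun v := g • v
  map_add' := smul_add g
  map_smul' c v := by simpa using smul_comm g c v

/-- `V` has finite length as an `o[H]`-module: it admits a composition series of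
`H`-stable `o`-submodules. -/
def IsFiniteLengthRep (H : Type) [Group H] (V : Type) [AddCommGroup V] [Module o V]
    [DistribMulAction H V] : Prop :=
  ∃ (n : ℕ) (c : Fin (n + 1) → Submodule o V),
    c 0 = ⊥ ∧ c (Fin.last n) = ⊤ ∧
    (∀ i, IsStableSub o V (Set.univ : Set H) (c i)) ∧
    (∀ i : Fin n, c i.castSucc < c i.succ) ∧
    (∀ i : Fin n, ∀ N : Submodule o V, IsStableSub o V (Set.univ : Set H) N →
      c i.castSucc ≤ N → N ≤ c i.succ → N = c i.castSucc ∨ N = c i.succ)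

/-- Smoothness: each vector has open stabilizer. -/
def IsSmoothRep (H : Type) [Group H] [TopologicalSpace H] (V : Type) [AddCommGroup V]
    [Module o V] [DistribMulAction H V] : Prop :=
  ∀ v : V, IsOpen {h : H | h • v = v}

/-- Admissibility: invariants under any compact open subgroup form a f.g. `o`-module. -/
def IsAdmissibleRep (H : Type) [Group H] [TopologicalSpace H] (V : Type) [AddCommGroup V]
    [Module o V] [DistribMulAction H V] [SMulCommClass H o V] : Prop :=
  ∀ H' : Subgroup H, IsCompact (H' : Set H) → IsOpen (H' : Set H) →
    (invariantsSub o H V (H' : Set H)).FG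

end RepPrelim

/-! ### Compact induction `ind_{S}^{H}(V₀)` and finite presentations -/

section Induction

variable (o : Type) [CommRing o]
variable {H : Type} [Group H] {V : Type} [AddCommGroup V] [Module o V]
variable [DistribMulAction H V] [SMulCommClass H o V]

/-- The compact induction `ind_S^H (V₀)`, realized as the `o`-module of functions
`f : H → V` with values in `V₀`, satisfying `f (s * h) = s • f h` for `s ∈ S`, and
supported on finitely many right cosets `S * x`. -/
def Ind (S : Subgroup H) (V0 : Submodule o V) : Submodule o (H → V) where
  carrier := {f | (∀ h, f h ∈ V0) ∧ (∀ s ∈ S, ∀ h, f (s * h) = s • f h) ∧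
      ∃ X : Finset H, ∀ h, f h ≠ 0 → ∃ s ∈ S, ∃ x ∈ X, h = s * x}
  add_mem' := by
    rintro f g ⟨hf1, hf2, Xf, hXf⟩ ⟨hg1, hg2, Xg, hXg⟩
    refine ⟨fun h => V0.add_mem (hf1 h) (hg1 h),
      fun s hs h => by simp only [Pi.add_apply, hf2 s hs h, hg2 s hs h, smul_add],
      Xf ∪ Xg, fun h hh => ?_⟩
    by_cases hf : f h = 0
    · have hg : g h ≠ 0 := fun h0 => hh (by simp [Pi.add_apply, hf, h0])
      obtain ⟨s, hs, x, hx, hxx⟩ := hXg h hg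
      exact ⟨s, hs, x, Finset.mem_union_right _ hx, hxx⟩
    · obtain ⟨s, hs, x, hx, hxx⟩ := hXf h hf
      exact ⟨s, hs, x, Finset.mem_union_left _ hx, hxx⟩
  zero_mem' :=
    ⟨fun _ => V0.zero_mem, fun s _ _ => (smul_zero s).symm, ∅, fun h hh => absurd rfl hh⟩
  smul_mem' := by
    rintro c f ⟨hf1, hf2, Xf, hXf⟩
    refine ⟨fun h => V0.smul_mem c (hf1 h),
      fun s hs h => by
        simp only [Pi.smul_apply, hf2 s hs h]
        exact (smul_comm s c (f h)).symm,
      Xf, fun h hh => hXf h (fun h0 => hh (by simp [Pi.smul_apply, h0]))⟩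

variable {S : Subgroup H} {V0 : Submodule o V}

/-- Right translation, giving the `H`-action on the compact induction. -/
def indTrans (g : H) (f : H → V) : H → V := fun h => f (h * g)

lemma indTrans_mem (g : H) {f : H → V} (hf : f ∈ Ind o S V0) : indTrans g f ∈ Ind o S V0 := by
  obtain ⟨h1, h2, X, hX⟩ := hf
  refine ⟨fun h => h1 _, fun s hs h => by
      simpa [indTrans, mul_assoc] using h2 s hs (h * g),
    X.image (· * g⁻¹), fun h hh => ?_⟩
  obtain ⟨s, hs, x, hx, hxx⟩ := hX (h * g) hh
  refine ⟨s, hs, x * g⁻¹, Finset.mem_image_of_mem _ hx, ?_⟩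
  rw [← mul_assoc, ← hxx, mul_assoc, mul_inv_cancel, mul_one]

instance : SMul H (Ind o S V0) :=
  ⟨fun g f => ⟨indTrans g (f : H → V), indTrans_mem o g f.2⟩⟩

lemma ind_smul_apply (g : H) (f : Ind o S V0) (h : H) :
    ((g • f : Ind o S V0) : H → V) h = (f : H → V) (h * g) := rfl

instance : MulAction H (Ind o S V0) where
  one_smul f := Subtype.ext (funext fun h => by simp [ind_smul_apply])
  mul_smul g1 g2 f := Subtype.ext (funext fun h => by simp [ind_smul_apply, mul_assoc])

instance : DistribMulAction H (Ind o S V0) where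
  smul_add g f1 f2 := Subtype.ext (funext fun h => rfl)
  smul_zero g := Subtype.ext (funext fun h => rfl)

instance : SMulCommClass H o (Ind o S V0) :=
  ⟨fun g c f => Subtype.ext (funext fun h => rfl)⟩

/-- The function `[1, v]` supported on `S`, with value `v` at `1`. -/
def unitFn (S : Subgroup H) (v : V) : H → V := fun h => if h ∈ S then h • v else 0

lemma unitFn_mem (hst : IsStableSub o V (S : Set H) V0) {v : V} (hv : v ∈ V0) :
    unitFn S v ∈ Ind o S V0 := by
  refine ⟨fun h => ?_, fun s hs h => ?_, {1}, fun h hh => ?_⟩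
  · by_cases h1 : h ∈ S
    · simpa [unitFn, h1] using hst h h1 v hv
    · simp [unitFn, h1, V0.zero_mem]
  · by_cases h1 : h ∈ S
    · have hsh : s * h ∈ S := S.mul_mem hs h1
      simp [unitFn, h1, hsh, mul_smul]
    · have hsh : s * h ∉ S := fun hc => h1 (by simpa using S.mul_mem (S.inv_mem hs) hc)
      simp [unitFn, h1, hsh]
  · by_cases h1 : h ∈ S
    · exact ⟨h, h1, 1, Finset.mem_singleton_self 1, (mul_one h).symm⟩
    · simp [unitFn, h1] at hh

/-- The element `[1, v]` of the compact induction. -/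
def unitElt (hst : IsStableSub o V (S : Set H) V0) {v : V} (hv : v ∈ V0) : Ind o S V0 :=
  ⟨unitFn S v, unitFn_mem o hst hv⟩

/-- `P` is the natural presentation map `ind_S^H (V₀) → V`: it is `H`-equivariant and sends
`[1, v]` to `v`. -/
def IsPresMap (hst : IsStableSub o V (S : Set H) V0) (P : Ind o S V0 →ₗ[o] V) : Prop :=
  (∀ (g : H) (f : Ind o S V0), P (g • f) = g • P f) ∧
  (∀ v (hv : v ∈ V0), P (unitElt o hst hv) = v)

end Induction

/-- `V₀ ⊆ V` yields a finite presentation `ind_S^H (V₀) → V`: `V₀` is an `S`-stable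
`o`-submodule, finitely generated over `o[S]`, generating `V` over `o[H]`, and the kernel of
the natural presentation map is finitely generated over `o[H]`. -/
def FinitelyPresentedVia (o : Type) [CommRing o] {H : Type} [Group H] {V : Type}
    [AddCommGroup V] [Module o V] [DistribMulAction H V] [SMulCommClass H o V]
    (S : Subgroup H) (V0 : Submodule o V) : Prop :=
  ∃ hst : IsStableSub o V (S : Set H) V0,
    IsFGOver o V (S : Set H) V0 ∧ gspan o V (Set.univ : Set H) (V0 : Set V) = ⊤ ∧
    ∃ P : Ind o S V0 →ₗ[o] V, IsPresMap o hst P ∧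
      IsFGOver o (Ind o S V0) (Set.univ : Set H) (LinearMap.ker P)

/-- `V` is of finite presentation relative to the open subgroup `S`. -/
def HasFinitePres (o : Type) [CommRing o] {H : Type} [Group H] (V : Type)
    [AddCommGroup V] [Module o V] [DistribMulAction H V] [SMulCommClass H o V]
    (S : Subgroup H) : Prop :=
  ∃ V0 : Submodule o V, FinitelyPresentedVia o S V0


/-! ### The group `GL(2,F)` over a nonarchimedean local field `F` -/

open Matrix

/-- Bundle of data making the field `F` a nonarchimedean local field: the valuation
ring `O`, a uniformizer `ϖ` generating the maximal ideal, finiteness of the residue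
field, compatibility of the topology with the valuation, and local compactness
(equivalently, completeness). -/
structure NALF (F : Type) [Field F] [TopologicalSpace F] [IsTopologicalRing F] where
  O : Subring F
  isValRing : ∀ x : F, x ≠ 0 → x ∈ O ∨ x⁻¹ ∈ O
  ϖ : F
  ϖ_mem : ϖ ∈ O
  ϖ_ne_zero : ϖ ≠ 0
  ϖ_not_unit : ϖ⁻¹ ∉ O
  ϖ_gen : ∀ x ∈ O, x⁻¹ ∉ O → x / ϖ ∈ O
  residue_finite : Finite (↥O ⧸ Ideal.span {(⟨ϖ, ϖ_mem⟩ : ↥O)})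
  nhds_zero : ∀ s : Set F, s ∈ nhds (0 : F) ↔ ∃ n : ℕ, {x : F | ∃ y ∈ O, x = ϖ ^ n * y} ⊆ s
  locallyCompact : LocallyCompactSpace F

variable (F : Type) [Field F]

lemma GL2.inv_entry_ne (g : GL (Fin 2) F)
    (hg : (g : Matrix (Fin 2) (Fin 2) F) 1 0 = 0) :
    ((g⁻¹ : GL (Fin 2) F) : Matrix (Fin 2) (Fin 2) F) 1 0 = 0 := by
  have hAC : (g : Matrix (Fin 2) (Fin 2) F) * ((g⁻¹ : GL (Fin 2) F) : Matrix (Fin 2) (Fin 2) F)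
      = 1 := by
    rw [← Units.val_mul, mul_inv_cancel, Units.val_one]
  have h1 : ((g : Matrix (Fin 2) (Fin 2) F) *
      ((g⁻¹ : GL (Fin 2) F) : Matrix (Fin 2) (Fin 2) F)) 1 0 = 0 := by
    rw [hAC]; exact Matrix.one_apply_ne (by decide)
  have h2 : ((g : Matrix (Fin 2) (Fin 2) F) *
      ((g⁻¹ : GL (Fin 2) F) : Matrix (Fin 2) (Fin 2) F)) 1 1 = 1 := by
    rw [hAC]; exact Matrix.one_apply_eq 1
  rw [Matrix.mul_apply, Fin.sum_univ_two, hg, zero_mul, zero_add] at h1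
  rw [Matrix.mul_apply, Fin.sum_univ_two, hg, zero_mul, zero_add] at h2
  rcases mul_eq_zero.mp h1 with h | h
  · exact absurd h2 (by rw [h, zero_mul]; exact zero_ne_one)
  · exact h

/-- The upper triangular (Borel) subgroup `B ⊆ GL(2,F)`. -/
def Bgr : Subgroup (GL (Fin 2) F) where
  carrier := {g | (g : Matrix (Fin 2) (Fin 2) F) 1 0 = 0}
  one_mem' := by
    show ((1 : GL (Fin 2) F) : Matrix (Fin 2) (Fin 2) F) 1 0 = 0
    rw [Units.val_one]; exact Matrix.one_apply_ne (by decide)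
  mul_mem' := by
    intro a b ha hb
    show ((a * b : GL (Fin 2) F) : Matrix (Fin 2) (Fin 2) F) 1 0 = 0
    rw [Units.val_mul, Matrix.mul_apply, Fin.sum_univ_two]
    simp only [Set.mem_setOf_eq] at ha hb
    rw [ha, hb, zero_mul, mul_zero, add_zero]
  inv_mem' := by
    intro a ha
    exact GL2.inv_entry_ne F a ha

/-- The maximal compact subgroup `K = GL(2, O_F)` of `GL(2,F)`. -/
def Kgr (O : Subring F) : Subgroup (GL (Fin 2) F) where
  carrier := {g | (∀ i j, (g : Matrix (Fin 2) (Fin 2) F) i j ∈ O) ∧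
      (∀ i j, ((g⁻¹ : GL (Fin 2) F) : Matrix (Fin 2) (Fin 2) F) i j ∈ O)}
  one_mem' := by
    constructor <;>
    · intro i j
      simp only [inv_one, Units.val_one]
      by_cases h : i = j
      · rw [h, Matrix.one_apply_eq]; exact O.one_mem
      · rw [Matrix.one_apply_ne h]; exact O.zero_mem
  mul_mem' := by
    rintro a b ⟨ha1, ha2⟩ ⟨hb1, hb2⟩
    constructor
    · intro i j
      rw [Units.val_mul, Matrix.mul_apply]
      exact Subring.sum_mem O fun k _ => O.mul_mem (ha1 i k) (hb1 k j)
    · intro i j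
      rw [_root_.mul_inv_rev, Units.val_mul, Matrix.mul_apply]
      exact Subring.sum_mem O fun k _ => O.mul_mem (hb2 i k) (ha2 k j)
  inv_mem' := by
    rintro a ⟨ha1, ha2⟩
    refine ⟨ha2, ?_⟩
    rw [inv_inv]
    exact ha1

/-- For a subgroup `A` of a group `G`, the subgroup `A · Z(G)`. -/
def centMul {G : Type} [Group G] (A : Subgroup G) : Subgroup G where
  carrier := {g | ∃ a ∈ A, ∃ z ∈ Subgroup.center G, g = a * z}
  one_mem' := ⟨1, A.one_mem, 1, (Subgroup.center G).one_mem, (one_mul 1).symm⟩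
  mul_mem' := by
    rintro x y ⟨a, ha, z, hz, rfl⟩ ⟨a', ha', z', hz', rfl⟩
    refine ⟨a * a', A.mul_mem ha ha', z * z', (Subgroup.center G).mul_mem hz hz', ?_⟩
    have hcz : a' * z = z * a' := Subgroup.mem_center_iff.mp hz a'
    calc a * z * (a' * z') = a * (z * a' * z') := by
          rw [mul_assoc]; rw [mul_assoc z a' z']
      _ = a * (a' * z * z') := by rw [← hcz]
      _ = a * a' * (z * z') := by rw [mul_assoc a a']; rw [mul_assoc a' z z']
  inv_mem' := by
    rintro x ⟨a, ha, z, hz, rfl⟩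
    refine ⟨a⁻¹, A.inv_mem ha, z⁻¹, (Subgroup.center G).inv_mem hz, ?_⟩
    rw [_root_.mul_inv_rev]
    exact (Subgroup.mem_center_iff.mp ((Subgroup.center G).inv_mem hz) a⁻¹).symm

variable [TopologicalSpace F] [IsTopologicalRing F] (L : NALF F)

/-- The element `t = diag(ϖ, 1)`. -/
def tGL : GL (Fin 2) F :=
  Matrix.GeneralLinearGroup.mkOfDetNeZero !![L.ϖ, 0; 0, 1]
    (by rw [Matrix.det_fin_two_of]; simpa using L.ϖ_ne_zero)

lemma tGL_val : (tGL F L : Matrix (Fin 2) (Fin 2) F) = !![L.ϖ, 0; 0, 1] := rfl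

/-- The unipotent element `u(x) = (1 x; 0 1)`. -/
def uGL (x : F) : GL (Fin 2) F :=
  Matrix.GeneralLinearGroup.mkOfDetNeZero !![1, x; 0, 1]
    (by rw [Matrix.det_fin_two_of]; simp)

lemma uGL_val (x : F) : (uGL F x : Matrix (Fin 2) (Fin 2) F) = !![1, x; 0, 1] := rfl

/-- The element `ω = (0 1; ϖ 0)`. -/
def ωGL : GL (Fin 2) F :=
  Matrix.GeneralLinearGroup.mkOfDetNeZero !![0, 1; L.ϖ, 0]
    (by rw [Matrix.det_fin_two_of]; simpa using L.ϖ_ne_zero)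

lemma ωGL_val : (ωGL F L : Matrix (Fin 2) (Fin 2) F) = !![0, 1; L.ϖ, 0] := rfl

/-- `B₀ = B ∩ K`: integral upper triangular matrices with unit diagonal. -/
def B0gr : Subgroup (GL (Fin 2) F) := Bgr F ⊓ Kgr F L.O

/-- The subgroup `KZ`. -/
def KZgr : Subgroup (GL (Fin 2) F) := centMul (Kgr F L.O)

/-- The subgroup `B₀Z`. -/
def B0Zgr : Subgroup (GL (Fin 2) F) := centMul (B0gr F L)

/-- The monoid `B⁺ = ⋃ₙ B₀ Z tⁿ`, as a subset of `GL(2,F)`. -/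
def BplusGL : Set (GL (Fin 2) F) :=
  {g | ∃ b ∈ B0Zgr F L, ∃ n : ℕ, g = b * (tGL F L) ^ n}

lemma tGL_mem_Bgr : tGL F L ∈ Bgr F := by
  show (tGL F L : Matrix (Fin 2) (Fin 2) F) 1 0 = 0
  rw [tGL_val]
  simp

lemma uGL_mem_Bgr (x : F) : uGL F x ∈ Bgr F := by
  show (uGL F x : Matrix (Fin 2) (Fin 2) F) 1 0 = 0
  rw [uGL_val]
  simp

/-- `t` as an element of `B`. -/
def tB : ↥(Bgr F) := ⟨tGL F L, tGL_mem_Bgr F L⟩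

/-- `u(x)` as an element of `B`. -/
def uB (x : F) : ↥(Bgr F) := ⟨uGL F x, uGL_mem_Bgr F x⟩

/-- The monoid `B⁺` as a subset of `B`. -/
def BplusB : Set ↥(Bgr F) := {b | (b : GL (Fin 2) F) ∈ BplusGL F L}

/-- The subgroup `B₀Z` of `B`. -/
def B0Zb : Subgroup ↥(Bgr F) := (B0Zgr F L).comap (Bgr F).subtype

/-- The subgroup `B ∩ KZ` of `B`. -/
def BcapKZb : Subgroup ↥(Bgr F) := (KZgr F L).comap (Bgr F).subtype

/-- The compact group `U₀ = U(O_F)` of integral upper unipotent matrices, as a subset. -/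
def U0set : Set (GL (Fin 2) F) :=
  {g | (g : Matrix (Fin 2) (Fin 2) F) 0 0 = 1 ∧ (g : Matrix (Fin 2) (Fin 2) F) 1 1 = 1 ∧
    (g : Matrix (Fin 2) (Fin 2) F) 1 0 = 0 ∧ (g : Matrix (Fin 2) (Fin 2) F) 0 1 ∈ L.O}

/-- `U_m = U(p_F^m O_F)`, as a subset of `GL(2,F)`. -/
def UmSet (m : ℕ) : Set (GL (Fin 2) F) :=
  {g | (g : Matrix (Fin 2) (Fin 2) F) 0 0 = 1 ∧ (g : Matrix (Fin 2) (Fin 2) F) 1 1 = 1 ∧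
    (g : Matrix (Fin 2) (Fin 2) F) 1 0 = 0 ∧
    ∃ y ∈ L.O, (g : Matrix (Fin 2) (Fin 2) F) 0 1 = L.ϖ ^ m * y}

/-- `U_m⁻ = U⁻(p_F^m O_F)`, the lower unipotent congruence subgroups, as a subset. -/
def UmMinusSet (m : ℕ) : Set (GL (Fin 2) F) :=
  {g | (g : Matrix (Fin 2) (Fin 2) F) 0 0 = 1 ∧ (g : Matrix (Fin 2) (Fin 2) F) 1 1 = 1 ∧
    (g : Matrix (Fin 2) (Fin 2) F) 0 1 = 0 ∧
    ∃ y ∈ L.O, (g : Matrix (Fin 2) (Fin 2) F) 1 0 = L.ϖ ^ m * y}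

/-- `T₀ = T(O_F)`: diagonal matrices with unit entries in `O_F`, as a subset. -/
def T0set : Set (GL (Fin 2) F) :=
  {g | (g : Matrix (Fin 2) (Fin 2) F) 1 0 = 0 ∧ (g : Matrix (Fin 2) (Fin 2) F) 0 1 = 0 ∧
    (g : Matrix (Fin 2) (Fin 2) F) 0 0 ∈ L.O ∧ ((g : Matrix (Fin 2) (Fin 2) F) 0 0)⁻¹ ∈ L.O ∧
    (g : Matrix (Fin 2) (Fin 2) F) 1 1 ∈ L.O ∧ ((g : Matrix (Fin 2) (Fin 2) F) 1 1)⁻¹ ∈ L.O}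

/-- The Iwahori subgroup `I ⊆ K`, as a subset: integral matrices whose reduction is
upper triangular. -/
def Iset : Set (GL (Fin 2) F) :=
  {g | g ∈ Kgr F L.O ∧ ∃ y ∈ L.O, (g : Matrix (Fin 2) (Fin 2) F) 1 0 = L.ϖ * y}

/-- The pro-`p` Iwahori subgroup `I₁ ⊆ I`, as a subset: integral matrices whose
reduction is upper unipotent. -/
def I1set : Set (GL (Fin 2) F) :=
  {g | g ∈ Kgr F L.O ∧ (∃ y ∈ L.O, (g : Matrix (Fin 2) (Fin 2) F) 1 0 = L.ϖ * y) ∧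
    (∃ y ∈ L.O, (g : Matrix (Fin 2) (Fin 2) F) 0 0 - 1 = L.ϖ * y) ∧
    (∃ y ∈ L.O, (g : Matrix (Fin 2) (Fin 2) F) 1 1 - 1 = L.ϖ * y)}

/-- The set `IZ`. -/
def IZset : Set (GL (Fin 2) F) :=
  {g | ∃ i ∈ Iset F L, ∃ z ∈ Subgroup.center (GL (Fin 2) F), g = i * z}

/-- The set `ωIZ`. -/
def ωIZset : Set (GL (Fin 2) F) := {g | ∃ h ∈ IZset F L, g = ωGL F L * h}


/-!
Present `V` as a quotient `P : ind_{B₀Z}^B(V₀) → V` and let `r` restrict functions to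
`{h | h⁻¹ ∉ B⁺}`. A vector of `<B⁺V₀>` is `P f` with `r f = 0`, while a vector of `V'` is `P f'`
with `f'` a combination of translates `b • [1, v']`, `v' ∈ V₀'`, so that
`P (f' - r f') ∈ <B⁺V₀'>`. If `P f = P f'`, the defect `P (r f') = -P (r (f - f'))` lies in
`P (r (ker P))`. As `ker P` is generated over `B` by finitely many `ρ`, it suffices that the
vectors `P (r (d • ρ))`, `d ∈ B`, lie in finitely many `B₀Z`-orbits: this uses that
`B⁺ = ⋃ₙ B₀Z tⁿ` and that `tⁿ g ∈ B⁺` for every `g ∈ B` and all large `n`.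
-/

variable {F} {L}

namespace NALF

variable (L)

lemma eq_zero_of_forall_mem_pow_mul {x : F} (hx : ∀ n : ℕ, ∃ y ∈ L.O, x = L.ϖ ^ n * y) :
    x = 0 := by
  by_contra hx0
  -- continuity of `y ↦ x⁻¹ y` gives `x⁻¹ ϖⁿ O ⊆ ϖ O` for some `n`, while `x ∈ ϖⁿ O`
  have hϖO : {z : F | ∃ y ∈ L.O, z = L.ϖ ^ 1 * y} ∈ nhds (0 : F) := (L.nhds_zero _).2 ⟨1, le_rfl⟩
  have hpre : (fun y => x⁻¹ * y) ⁻¹' {z | ∃ y ∈ L.O, z = L.ϖ ^ 1 * y} ∈ nhds (0 : F) :=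
    (continuous_const_mul x⁻¹).tendsto' 0 0 (mul_zero _) hϖO
  obtain ⟨n, hn⟩ := (L.nhds_zero _).1 hpre
  obtain ⟨y, hy, hxy⟩ : ∃ y ∈ L.O, x⁻¹ * x = L.ϖ ^ 1 * y := hn (hx n)
  rw [inv_mul_cancel₀ hx0, pow_one] at hxy
  exact L.ϖ_not_unit (inv_eq_of_mul_eq_one_right hxy.symm ▸ hy)

lemma exists_unit_mul_pow {x : F} (hx : x ∈ L.O) (hx0 : x ≠ 0) :
    ∃ (n : ℕ) (u : F), u ∈ L.O ∧ u⁻¹ ∈ L.O ∧ x = u * L.ϖ ^ n := by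
  by_contra! hcon
  refine hx0 (L.eq_zero_of_forall_mem_pow_mul fun n => ?_)
  induction n with
  | zero => exact ⟨x, hx, by rw [pow_zero, one_mul]⟩
  | succ n ih =>
    obtain ⟨y, hy, rfl⟩ := ih
    have hyinv : y⁻¹ ∉ L.O := fun hyi => hcon n y hy hyi (mul_comm _ _)
    refine ⟨y / L.ϖ, L.ϖ_gen y hy hyinv, ?_⟩
    rw [pow_succ, mul_assoc, mul_div_cancel₀ y L.ϖ_ne_zero]

lemma exists_pow_mul_mem (x : F) : ∃ m : ℕ, L.ϖ ^ m * x ∈ L.O := by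
  by_cases hx : x ∈ L.O
  · exact ⟨0, by rwa [pow_zero, one_mul]⟩
  by_cases hx0 : x = 0
  · exact absurd (hx0 ▸ L.O.zero_mem) hx
  obtain ⟨n, u, -, hu, hxu⟩ :=
    L.exists_unit_mul_pow ((L.isValRing x hx0).resolve_left hx) (inv_ne_zero hx0)
  refine ⟨n, ?_⟩
  convert hu using 1
  rw [← inv_inv x, hxu]
  field_simp [L.ϖ_ne_zero]

end NALF

section BorelPlus

lemma tGL_pow_val (n : ℕ) :
    (((tGL F L) ^ n : GL (Fin 2) F) : Matrix (Fin 2) (Fin 2) F) = !![L.ϖ ^ n, 0; 0, 1] := by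
  induction n with
  | zero => rw [pow_zero, pow_zero, Units.val_one, Matrix.one_fin_two]
  | succ n ih =>
    rw [pow_succ, Units.val_mul, ih, tGL_val, Matrix.mul_fin_two]
    simp [pow_succ]

lemma tGL_inv_val :
    (((tGL F L)⁻¹ : GL (Fin 2) F) : Matrix (Fin 2) (Fin 2) F) = !![L.ϖ⁻¹, 0; 0, 1] := by
  rw [Matrix.coe_units_inv, tGL_val, Matrix.inv_def]
  simp [Matrix.adjugate_fin_two, L.ϖ_ne_zero]

lemma conj_tGL_val (g : GL (Fin 2) F) :
    ((tGL F L * g * (tGL F L)⁻¹ : GL (Fin 2) F) : Matrix (Fin 2) (Fin 2) F) =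
      !![g 0 0, L.ϖ * g 0 1; g 1 0 * L.ϖ⁻¹, g 1 1] := by
  rw [Units.val_mul, Units.val_mul, tGL_val, tGL_inv_val, Matrix.eta_fin_two (g : Matrix _ _ F)]
  simp [mul_comm L.ϖ, L.ϖ_ne_zero]

lemma conj_tGL_entry_mem {g : GL (Fin 2) F} (hg : g ∈ Bgr F) (hgO : ∀ i j, g i j ∈ L.O)
    (i j : Fin 2) : (tGL F L * g * (tGL F L)⁻¹) i j ∈ L.O := by
  have hg10 : g 1 0 = 0 := hg
  rw [conj_tGL_val]
  fin_cases i <;> fin_cases j <;> simp [hg10, hgO, L.O.mul_mem L.ϖ_mem (hgO 0 1)]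

lemma conj_tGL_mem_B0gr {g : GL (Fin 2) F} (hg : g ∈ B0gr F L) :
    tGL F L * g * (tGL F L)⁻¹ ∈ B0gr F L := by
  obtain ⟨hgB, hgO, hginvO⟩ := hg
  have htB := tGL_mem_Bgr F L
  refine ⟨(Bgr F).mul_mem ((Bgr F).mul_mem htB hgB) ((Bgr F).inv_mem htB),
    conj_tGL_entry_mem hgB hgO, ?_⟩
  rw [show (tGL F L * g * (tGL F L)⁻¹)⁻¹ = tGL F L * g⁻¹ * (tGL F L)⁻¹ by group]
  exact conj_tGL_entry_mem ((Bgr F).inv_mem hgB) hginvO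

lemma conj_tGL_pow_mem_B0Zgr (n : ℕ) {g : GL (Fin 2) F} (hg : g ∈ B0Zgr F L) :
    tGL F L ^ n * g * (tGL F L ^ n)⁻¹ ∈ B0Zgr F L := by
  induction n with
  | zero => simpa using hg
  | succ n ih =>
    obtain ⟨a, ha, z, hz, hconj⟩ := ih
    refine ⟨tGL F L * a * (tGL F L)⁻¹, conj_tGL_mem_B0gr ha, z, hz, ?_⟩
    have hzt : (tGL F L)⁻¹ * z = z * (tGL F L)⁻¹ := Subgroup.mem_center_iff.mp hz _
    calc tGL F L ^ (n + 1) * g * (tGL F L ^ (n + 1))⁻¹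
        = tGL F L * (tGL F L ^ n * g * (tGL F L ^ n)⁻¹) * (tGL F L)⁻¹ := by group
      _ = tGL F L * a * ((tGL F L)⁻¹ * z) := by rw [hconj, hzt]; group
      _ = tGL F L * a * (tGL F L)⁻¹ * z := by group

lemma exists_mem_B0gr_val {u β : F} (hu0 : u ≠ 0) (hu : u ∈ L.O) (hu' : u⁻¹ ∈ L.O)
    (hβ : β ∈ L.O) : ∃ k ∈ B0gr F L, (k : Matrix (Fin 2) (Fin 2) F) = !![u, β; 0, 1] := by
  refine ⟨Matrix.GeneralLinearGroup.mkOfDetNeZero !![u, β; 0, 1] (by simpa using hu0),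
    ⟨by simp [Bgr], fun i j => ?_, fun i j => ?_⟩, rfl⟩
  · fin_cases i <;> fin_cases j <;> simp [hu, hβ, L.O.zero_mem, L.O.one_mem]
  · rw [Matrix.coe_units_inv, Matrix.inv_def]
    fin_cases i <;> fin_cases j <;>
      simp [Matrix.adjugate_fin_two, hu', L.O.zero_mem, L.O.one_mem, hu0, L.O.mul_mem hu' hβ]

lemma exists_tGL_pow_mul_mem_BplusGL {g : GL (Fin 2) F} (hg : g ∈ Bgr F) :
    ∃ m : ℕ, tGL F L ^ m * g ∈ BplusGL F L := by
  have hg10 : g 1 0 = 0 := hg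
  have hdet : g 0 0 * g 1 1 ≠ 0 := by
    simpa [Matrix.det_fin_two, hg10] using g.det_ne_zero
  have hA : g 0 0 ≠ 0 := left_ne_zero_of_mul hdet
  have hD : g 1 1 ≠ 0 := right_ne_zero_of_mul hdet
  obtain ⟨m₁, hm₁⟩ := L.exists_pow_mul_mem (g 0 0 / g 1 1)
  obtain ⟨m₂, hm₂⟩ := L.exists_pow_mul_mem (g 0 1 / g 1 1)
  have hpow_mul_mem : ∀ k {x : F}, x ∈ L.O → L.ϖ ^ k * x ∈ L.O :=
    fun k _ hx => L.O.mul_mem (L.O.pow_mem L.ϖ_mem k) hx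
  have ha : L.ϖ ^ (m₁ + m₂) * (g 0 0 / g 1 1) ∈ L.O := by
    rw [pow_add, mul_comm (L.ϖ ^ m₁), mul_assoc]; exact hpow_mul_mem m₂ hm₁
  have hβ : L.ϖ ^ (m₁ + m₂) * (g 0 1 / g 1 1) ∈ L.O := by
    rw [pow_add, mul_assoc]; exact hpow_mul_mem m₁ hm₂
  have ha0 : L.ϖ ^ (m₁ + m₂) * (g 0 0 / g 1 1) ≠ 0 :=
    mul_ne_zero (pow_ne_zero _ L.ϖ_ne_zero) (div_ne_zero hA hD)
  obtain ⟨n, u, hu, hu', hau⟩ := L.exists_unit_mul_pow ha ha0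
  have hu0 : u ≠ 0 := by
    rintro rfl
    exact ha0 (by rw [hau, zero_mul])
  obtain ⟨k, hk, hkval⟩ := exists_mem_B0gr_val hu0 hu hu' hβ
  let z := Matrix.GeneralLinearGroup.scalar (Fin 2) (Units.mk0 (g 1 1) hD)
  have hz : z ∈ Subgroup.center (GL (Fin 2) F) := by
    rw [Matrix.GeneralLinearGroup.center_eq_range_scalar]; exact ⟨_, rfl⟩
  refine ⟨m₁ + m₂, k * z, ⟨k, hk, z, hz, rfl⟩, n, Units.ext ?_⟩
  rw [Units.val_mul, Units.val_mul, Units.val_mul, tGL_pow_val, tGL_pow_val, hkval,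
    Matrix.eta_fin_two (g : Matrix _ _ F)]
  ext i j
  fin_cases i <;> fin_cases j <;> simp [z, hg10]
  · rw [mul_right_comm u, ← hau]; field_simp
  · field_simp

lemma mem_BplusB_iff {b : Bgr F} :
    b ∈ BplusB F L ↔ ∃ s ∈ B0Zb F L, ∃ n : ℕ, b = s * tB F L ^ n := by
  constructor
  · rintro ⟨s, hs, n, hb⟩
    have hsB : s ∈ Bgr F := by
      rw [show s = b * (tGL F L ^ n)⁻¹ by rw [hb]; group]
      exact (Bgr F).mul_mem b.2 ((Bgr F).inv_mem ((Bgr F).pow_mem (tGL_mem_Bgr F L) n))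
    exact ⟨⟨s, hsB⟩, hs, n, Subtype.ext hb⟩
  · rintro ⟨s, hs, n, rfl⟩
    exact ⟨s, hs, n, rfl⟩

lemma tB_pow_conj_mem_B0Zb (n : ℕ) {s : Bgr F} (hs : s ∈ B0Zb F L) :
    tB F L ^ n * s * (tB F L ^ n)⁻¹ ∈ B0Zb F L :=
  conj_tGL_pow_mem_B0Zgr n hs

lemma B0Zb_mul_BplusB_mem {s b : Bgr F} (hs : s ∈ B0Zb F L) (hb : b ∈ BplusB F L) :
    s * b ∈ BplusB F L := by
  obtain ⟨s₀, hs₀, n, rfl⟩ := mem_BplusB_iff.1 hb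
  exact mem_BplusB_iff.2 ⟨s * s₀, mul_mem hs hs₀, n, by group⟩

lemma BplusB_mul_B0Zb_mem {b s : Bgr F} (hb : b ∈ BplusB F L) (hs : s ∈ B0Zb F L) :
    b * s ∈ BplusB F L := by
  obtain ⟨s₀, hs₀, n, rfl⟩ := mem_BplusB_iff.1 hb
  exact mem_BplusB_iff.2
    ⟨s₀ * (tB F L ^ n * s * (tB F L ^ n)⁻¹), mul_mem hs₀ (tB_pow_conj_mem_B0Zb n hs), n, by group⟩

lemma tB_pow_mul_mem_BplusB (k : ℕ) {b : Bgr F} (hb : b ∈ BplusB F L) :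
    tB F L ^ k * b ∈ BplusB F L := by
  obtain ⟨s₀, hs₀, n, rfl⟩ := mem_BplusB_iff.1 hb
  exact mem_BplusB_iff.2
    ⟨tB F L ^ k * s₀ * (tB F L ^ k)⁻¹, tB_pow_conj_mem_B0Zb k hs₀, k + n, by group⟩

lemma eventually_tB_pow_mul_mem_BplusB (g : Bgr F) :
    ∀ᶠ n in Filter.atTop, tB F L ^ n * g ∈ BplusB F L := by
  obtain ⟨m, hm⟩ := exists_tGL_pow_mul_mem_BplusGL (L := L) g.2
  refine Filter.eventually_atTop.2 ⟨m, fun n hn => ?_⟩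
  rw [← Nat.sub_add_cancel hn, pow_add, mul_assoc]
  exact tB_pow_mul_mem_BplusB _ hm

end BorelPlus

section Gspan

variable {o : Type} [CommRing o] {H : Type} {V : Type} [AddCommGroup V] [Module o V]

lemma gspan_mono [SMul H V] {S : Set H} {W W' : Set V} (h : W ⊆ W') :
    gspan o V S W ≤ gspan o V S W' :=
  Submodule.span_mono fun _ ⟨s, hs, w, hw, hv⟩ => ⟨s, hs, w, h hw, hv⟩

lemma map_gspan [SMul H V] {V' : Type} [AddCommGroup V'] [Module o V'] [SMul H V']
    (φ : V →ₗ[o] V') (hφ : ∀ (g : H) (v : V), φ (g • v) = g • φ v) (S : Set H) (W : Set V) :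
    (gspan o V S W).map φ = gspan o V' S (φ '' W) := by
  rw [gspan, gspan, Submodule.map_span]
  congr 1
  ext v
  constructor
  · rintro ⟨_, ⟨s, hs, w, hw, rfl⟩, rfl⟩
    exact ⟨s, hs, φ w, ⟨w, hw, rfl⟩, hφ s w⟩
  · rintro ⟨s, hs, _, ⟨w, hw, rfl⟩, rfl⟩
    exact ⟨s • w, ⟨s, hs, w, hw, rfl⟩, hφ s w⟩

lemma isStableSub_gspan [Group H] [DistribMulAction H V] [SMulCommClass H o V]
    (S : Subgroup H) (W : Set V) : IsStableSub o V (S : Set H) (gspan o V (S : Set H) W) := by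
  intro s hs v hv
  refine Submodule.span_induction (fun _ ⟨s', hs', w, hw, hv⟩ => ?_) ?_ (fun _ _ _ _ ha hb => ?_)
    (fun c _ _ ha => ?_) hv
  · exact Submodule.subset_span ⟨s * s', mul_mem hs hs', w, hw, by rw [hv, mul_smul]⟩
  · rw [smul_zero]; exact Submodule.zero_mem _
  · rw [smul_add]; exact Submodule.add_mem _ ha hb
  · rw [smul_comm]; exact Submodule.smul_mem _ c ha

lemma isFGOver_gspan [Group H] [MulAction H V] (S : Subgroup H) (Z : Finset V) :
    IsFGOver o V (S : Set H) (gspan o V (S : Set H) (Z : Set V)) :=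
  ⟨Z, fun z hz => Submodule.subset_span ⟨1, S.one_mem, z, hz, (one_smul H z).symm⟩, rfl⟩

lemma isFGOver_bot [SMul H V] (S : Set H) : IsFGOver o V S ⊥ :=
  ⟨∅, by simp, by simp [gspan]⟩

lemma isStableSub_bot [Monoid H] [DistribMulAction H V] (S : Set H) : IsStableSub o V S ⊥ := by
  simp [IsStableSub]

end Gspan

section RestrictOutside

variable {o : Type} [CommRing o] {H : Type} [Group H]
variable {V : Type} [AddCommGroup V] [Module o V] [DistribMulAction H V] [SMulCommClass H o V]
variable {S : Subgroup H} {V0 : Submodule o V} {Bp : Set H}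

lemma mul_mem_iff_of_forall_mul_mem (hBS : ∀ b ∈ Bp, ∀ s ∈ S, b * s ∈ Bp) {s : H} (hs : s ∈ S)
    (b : H) : b * s ∈ Bp ↔ b ∈ Bp :=
  ⟨fun h => by simpa using hBS _ h _ (S.inv_mem hs), fun h => hBS b h s hs⟩

lemma inv_mem_iff_of_smul_apply_ne_zero (hBS : ∀ b ∈ Bp, ∀ s ∈ S, b * s ∈ Bp) {X : Finset H}
    {ρ : Ind o S V0} (hX : ∀ h, (ρ : H → V) h ≠ 0 → ∃ s ∈ S, ∃ x ∈ X, h = s * x) {d h : H}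
    (hρ : ((d • ρ : Ind o S V0) : H → V) h ≠ 0) : ∃ x ∈ X, (h⁻¹ ∈ Bp ↔ d * x⁻¹ ∈ Bp) := by
  obtain ⟨s, hs, x, hx, hhd⟩ := hX (h * d) hρ
  refine ⟨x, hx, ?_⟩
  rw [← mul_mem_iff_of_forall_mul_mem hBS (S.inv_mem hs) (d * x⁻¹),
    show d * x⁻¹ * s⁻¹ = h⁻¹ by rw [eq_mul_inv_of_mul_eq hhd]; group]

def Ind.restrictOutside (hBS : ∀ b ∈ Bp, ∀ s ∈ S, b * s ∈ Bp) :
    Ind o S V0 →ₗ[o] Ind o S V0 where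
  toFun f := ⟨fun h => if h⁻¹ ∈ Bp then 0 else (f : H → V) h, by
    obtain ⟨hV0, hequiv, X, hX⟩ := f.2
    refine ⟨fun h => ?_, fun s hs h => ?_, X, fun h hh => hX h fun h0 => hh (by simp [h0])⟩
    · dsimp only
      split_ifs
      exacts [V0.zero_mem, hV0 h]
    · dsimp only
      rw [_root_.mul_inv_rev, mul_mem_iff_of_forall_mul_mem hBS (S.inv_mem hs)]
      split_ifs
      exacts [(smul_zero s).symm, hequiv s hs h]⟩
  map_add' f g := Subtype.ext <| funext fun h => by
    by_cases hh : h⁻¹ ∈ Bp <;> simp [hh]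
  map_smul' c f := Subtype.ext <| funext fun h => by
    by_cases hh : h⁻¹ ∈ Bp <;> simp [hh]

variable (hBS : ∀ b ∈ Bp, ∀ s ∈ S, b * s ∈ Bp)

lemma Ind.restrictOutside_apply (f : Ind o S V0) (h : H) :
    (restrictOutside hBS f : H → V) h = if h⁻¹ ∈ Bp then 0 else (f : H → V) h := rfl

lemma Ind.restrictOutside_smul_of_forall_not_mem {X : Finset H} {ρ : Ind o S V0}
    (hX : ∀ h, (ρ : H → V) h ≠ 0 → ∃ s ∈ S, ∃ x ∈ X, h = s * x) {d : H}
    (hd : ∀ x ∈ X, d * x⁻¹ ∉ Bp) : restrictOutside hBS (d • ρ) = d • ρ := by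
  refine Subtype.ext <| funext fun h => ?_
  rw [restrictOutside_apply, ite_eq_right_iff]
  intro hh
  by_contra hρ
  obtain ⟨x, hx, hiff⟩ := inv_mem_iff_of_smul_apply_ne_zero hBS hX (Ne.symm hρ)
  exact hd x hx (hiff.1 hh)

lemma Ind.restrictOutside_smul_of_forall_mem {X : Finset H} {ρ : Ind o S V0}
    (hX : ∀ h, (ρ : H → V) h ≠ 0 → ∃ s ∈ S, ∃ x ∈ X, h = s * x) {d : H}
    (hd : ∀ x ∈ X, d * x⁻¹ ∈ Bp) : restrictOutside hBS (d • ρ) = 0 := by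
  refine Subtype.ext <| funext fun h => ?_
  simp only [restrictOutside_apply, ZeroMemClass.coe_zero, Pi.zero_apply, ite_eq_left_iff]
  intro hh
  by_contra hρ
  obtain ⟨x, hx, hiff⟩ := inv_mem_iff_of_smul_apply_ne_zero hBS hX hρ
  exact hh (hiff.2 (hd x hx))

lemma Ind.restrictOutside_smul_of_mem (hSB : ∀ s ∈ S, ∀ b ∈ Bp, s * b ∈ Bp) {s : H}
    (hs : s ∈ S) (f : Ind o S V0) : restrictOutside hBS (s • f) = s • restrictOutside hBS f := by
  refine Subtype.ext <| funext fun h => ?_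
  have hiff : s⁻¹ * h⁻¹ ∈ Bp ↔ h⁻¹ ∈ Bp :=
    ⟨fun hb => by simpa using hSB s hs _ hb, hSB _ (S.inv_mem hs) _⟩
  simp only [restrictOutside_apply, ind_smul_apply, _root_.mul_inv_rev, hiff]

lemma unitElt_support (hst : IsStableSub o V (S : Set H) V0) {v : V} (hv : v ∈ V0) (h : H)
    (hh : (unitElt o hst hv : H → V) h ≠ 0) : ∃ s ∈ S, ∃ x ∈ ({1} : Finset H), h = s * x := by
  by_cases hS : h ∈ S
  · exact ⟨h, hS, 1, Finset.mem_singleton_self 1, (mul_one h).symm⟩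
  · exact absurd (if_neg hS) hh

lemma IsPresMap.map_smul_unitElt {hst : IsStableSub o V (S : Set H) V0}
    {P : Ind o S V0 →ₗ[o] V} (hP : IsPresMap o hst P) (c : H) {v : V} (hv : v ∈ V0) :
    P (c • unitElt o hst hv) = c • v := by
  rw [hP.1, hP.2]

lemma gspan_le_map_ker_restrictOutside
    {hst : IsStableSub o V (S : Set H) V0} {P : Ind o S V0 →ₗ[o] V} (hP : IsPresMap o hst P) :
    gspan o V Bp (V0 : Set V) ≤ (LinearMap.ker (Ind.restrictOutside hBS)).map P := by
  refine Submodule.span_le.2 ?_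
  rintro _ ⟨b, hb, w, hw, rfl⟩
  refine ⟨b • unitElt o hst hw, ?_, hP.map_smul_unitElt b hw⟩
  exact Ind.restrictOutside_smul_of_forall_mem hBS (unitElt_support hst hw)
    (by simpa using hb)

lemma gspan_univ_le_map_restrictOutside
    {hst : IsStableSub o V (S : Set H) V0} {P : Ind o S V0 →ₗ[o] V} (hP : IsPresMap o hst P)
    {W : Set V} (hW : W ⊆ V0) :
    gspan o V (Set.univ : Set H) W ≤
      ((gspan o V Bp W).comap (P ∘ₗ (LinearMap.id - Ind.restrictOutside hBS))).map P := by
  refine Submodule.span_le.2 ?_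
  rintro _ ⟨c, -, w, hw, rfl⟩
  refine ⟨c • unitElt o hst (hW hw), ?_, hP.map_smul_unitElt c _⟩
  by_cases hc : c ∈ Bp
  · rw [SetLike.mem_coe, Submodule.mem_comap, LinearMap.comp_apply, LinearMap.sub_apply,
      Ind.restrictOutside_smul_of_forall_mem hBS (unitElt_support hst _) (by simpa using hc),
      LinearMap.id_apply, sub_zero, hP.map_smul_unitElt]
    exact Submodule.subset_span ⟨c, hc, w, hw, rfl⟩
  · rw [SetLike.mem_coe, Submodule.mem_comap, LinearMap.comp_apply, LinearMap.sub_apply,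
      Ind.restrictOutside_smul_of_forall_not_mem hBS (unitElt_support hst _) (by simpa using hc),
      LinearMap.id_apply, sub_self, map_zero]
    exact Submodule.zero_mem _

/-- If `d x⁻¹ ∈ Bp` for some coset representative `x` of the support of `ρ` but
`d y⁻¹ ∉ Bp` for another one `y`, then `d ∈ S τⁿ x` with `n` bounded in terms of `x y⁻¹`;
otherwise restricting `d • ρ` outside `Bp⁻¹` gives `d • ρ` or `0`, both in `ker P`. -/
lemma map_restrictOutside_smul_mem (hSB : ∀ s ∈ S, ∀ b ∈ Bp, s * b ∈ Bp) {τ : H}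
    (hfact : ∀ b ∈ Bp, ∃ s ∈ S, ∃ n : ℕ, b = s * τ ^ n) {P : Ind o S V0 →ₗ[o] V}
    (hPeq : ∀ (g : H) (f : Ind o S V0), P (g • f) = g • P f) {ρ : Ind o S V0} (hρ : P ρ = 0)
    {X : Finset H} (hX : ∀ h, (ρ : H → V) h ≠ 0 → ∃ s ∈ S, ∃ x ∈ X, h = s * x) {m : ℕ}
    (hm : ∀ x ∈ X, ∀ y ∈ X, ∀ n ≥ m, τ ^ n * (x * y⁻¹) ∈ Bp) (d : H) :
    P (Ind.restrictOutside hBS (d • ρ)) ∈ gspan o V (S : Set H)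
      ((X ×ˢ Finset.range m).image fun p => P (Ind.restrictOutside hBS ((τ ^ p.2 * p.1) • ρ))) := by
  by_cases hnone : ∀ x ∈ X, d * x⁻¹ ∉ Bp
  · rw [Ind.restrictOutside_smul_of_forall_not_mem hBS hX hnone, hPeq, hρ, smul_zero]
    exact Submodule.zero_mem _
  obtain ⟨x, hx, hdx⟩ := not_forall₂.1 hnone
  rw [not_not] at hdx
  by_cases hall : ∀ y ∈ X, d * y⁻¹ ∈ Bp
  · rw [Ind.restrictOutside_smul_of_forall_mem hBS hX hall, map_zero]
    exact Submodule.zero_mem _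
  obtain ⟨y, hy, hdy⟩ := not_forall₂.1 hall
  obtain ⟨s, hs, n, hsn⟩ := hfact _ hdx
  have hd : d = s * (τ ^ n * x) := by rw [← mul_assoc, ← hsn]; group
  have hn : n < m := by
    by_contra! hmn
    apply hdy
    rw [hd, show s * (τ ^ n * x) * y⁻¹ = s * (τ ^ n * (x * y⁻¹)) by group]
    exact hSB s hs _ (hm x hx y hy n hmn)
  rw [hd, mul_smul, Ind.restrictOutside_smul_of_mem hBS hSB hs, hPeq]
  exact Submodule.subset_span ⟨s, hs, _, Finset.mem_image_of_mem _
    ((Finset.mem_product (p := (x, n))).2 ⟨hx, Finset.mem_range.2 hn⟩), rfl⟩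

lemma exists_ker_le_comap_restrictOutside (hSB : ∀ s ∈ S, ∀ b ∈ Bp, s * b ∈ Bp) {τ : H}
    (hfact : ∀ b ∈ Bp, ∃ s ∈ S, ∃ n : ℕ, b = s * τ ^ n)
    (hgrow : ∀ g : H, ∀ᶠ n in Filter.atTop, τ ^ n * g ∈ Bp) {P : Ind o S V0 →ₗ[o] V}
    (hPeq : ∀ (g : H) (f : Ind o S V0), P (g • f) = g • P f)
    (hker : IsFGOver o (Ind o S V0) (Set.univ : Set H) (LinearMap.ker P)) :
    ∃ Z : Finset V, LinearMap.ker P ≤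
      (gspan o V (S : Set H) (Z : Set V)).comap (P ∘ₗ Ind.restrictOutside hBS) := by
  obtain ⟨R, hRker, hRgen⟩ := hker
  choose X hX using fun ρ : Ind o S V0 => ρ.2.2.2
  have hbound : ∀ ρ : Ind o S V0, ∃ m : ℕ, ∀ x ∈ X ρ, ∀ y ∈ X ρ, ∀ n ≥ m,
      τ ^ n * (x * y⁻¹) ∈ Bp := fun ρ => by
    obtain ⟨m, hm⟩ := Filter.eventually_atTop.1 <| (Filter.eventually_all_finset (X ρ)).2
      fun x _ => (Filter.eventually_all_finset (X ρ)).2 fun y _ => hgrow (x * y⁻¹)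
    exact ⟨m, fun x hx y hy n hn => hm n hn x hx y hy⟩
  choose m hm using hbound
  refine ⟨R.biUnion fun ρ => (X ρ ×ˢ Finset.range (m ρ)).image
    fun p => P (Ind.restrictOutside hBS ((τ ^ p.2 * p.1) • ρ)), ?_⟩
  rw [hRgen]
  refine Submodule.span_le.2 ?_
  rintro _ ⟨d, -, ρ, hρ, rfl⟩
  exact gspan_mono (Finset.coe_subset.2 (Finset.subset_biUnion_of_mem _ hρ))
    (map_restrictOutside_smul_mem hBS hSB hfact hPeq (hRker hρ) (hX ρ) (hm ρ) d)

lemma gspan_inf_gspan_univ_le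
    {hst : IsStableSub o V (S : Set H) V0} {P : Ind o S V0 →ₗ[o] V} (hP : IsPresMap o hst P)
    {N : Submodule o V} (hN : LinearMap.ker P ≤ N.comap (P ∘ₗ Ind.restrictOutside hBS))
    {W : Set V} (hW : W ⊆ V0) :
    gspan o V Bp (V0 : Set V) ⊓ gspan o V (Set.univ : Set H) W ≤ gspan o V Bp W ⊔ N := by
  rintro _ ⟨hv, hvW⟩
  obtain ⟨f, hf, rfl⟩ := gspan_le_map_ker_restrictOutside hBS hP hv
  obtain ⟨f', hf', hff'⟩ := gspan_univ_le_map_restrictOutside hBS hP hW hvW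
  have hN' : P (Ind.restrictOutside hBS f') ∈ N := by
    have hker : f' - f ∈ LinearMap.ker P := by simp [hff']
    simpa [LinearMap.mem_ker.1 hf] using hN hker
  rw [← hff', ← sub_add_cancel f' (Ind.restrictOutside hBS f'), map_add]
  exact Submodule.add_mem_sup hf' hN'

end RestrictOutside

theorem statement5_general
    (o : Type) [CommRing o]
    (F : Type) [Field F] [TopologicalSpace F] [IsTopologicalRing F] (LF : NALF F)
    (V' : Type) [AddCommGroup V'] [Module o V']
    [DistribMulAction (↥(Bgr F)) V'] [SMulCommClass (↥(Bgr F)) o V']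
    (V : Type) [AddCommGroup V] [Module o V]
    [DistribMulAction (↥(Bgr F)) V] [SMulCommClass (↥(Bgr F)) o V]
    (V'' : Type) [AddCommGroup V''] [Module o V'']
    [DistribMulAction (↥(Bgr F)) V''] [SMulCommClass (↥(Bgr F)) o V'']
    (ι : V' →ₗ[o] V)
    (hιeq : ∀ (b : ↥(Bgr F)) (v : V'), ι (b • v) = b • ι v)
    (π : V →ₗ[o] V'')
    (hπeq : ∀ (b : ↥(Bgr F)) (v : V), π (b • v) = b • π v)
    (hexact : LinearMap.range ι = LinearMap.ker π)
    (V0 : Submodule o V)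
    (hst : IsStableSub o V ((B0Zb F LF : Subgroup ↥(Bgr F)) : Set ↥(Bgr F)) V0)
    (P : Ind o (B0Zb F LF) V0 →ₗ[o] V) (hP : IsPresMap o hst P)
    (hker : IsFGOver o (↥(Ind o (B0Zb F LF) V0)) (Set.univ : Set ↥(Bgr F)) (LinearMap.ker P))
    (hgen0' : gspan o V' (Set.univ : Set ↥(Bgr F)) ((Submodule.comap ι V0 : Submodule o V') : Set V') = ⊤) :
    (∃ N : Submodule o V,
      IsStableSub o V ((B0Zb F LF : Subgroup ↥(Bgr F)) : Set ↥(Bgr F)) N ∧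
      IsFGOver o V ((B0Zb F LF : Subgroup ↥(Bgr F)) : Set ↥(Bgr F)) N ∧
      gspan o V (BplusB F LF) (V0 : Set V) ⊓ LinearMap.range ι ≤
        Submodule.map ι (gspan o V' (BplusB F LF) ((Submodule.comap ι V0 : Submodule o V') : Set V')) ⊔ N) ∧
    (∃ N : Submodule o V,
      IsStableSub o V ((B0Zb F LF : Subgroup ↥(Bgr F)) : Set ↥(Bgr F)) N ∧
      IsFGOver o V ((B0Zb F LF : Subgroup ↥(Bgr F)) : Set ↥(Bgr F)) N ∧
      Submodule.map ι (gspan o V' (BplusB F LF) ((Submodule.comap ι V0 : Submodule o V') : Set V')) ⊔ N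
        = (gspan o V (BplusB F LF) (V0 : Set V) ⊓ LinearMap.ker π) ⊔ N) ∧
    (∃ N'' : Submodule o V'',
      IsStableSub o V'' ((B0Zb F LF : Subgroup ↥(Bgr F)) : Set ↥(Bgr F)) N'' ∧
      IsFGOver o V'' ((B0Zb F LF : Subgroup ↥(Bgr F)) : Set ↥(Bgr F)) N'' ∧
      Submodule.map π (gspan o V (BplusB F LF) (V0 : Set V)) ⊔ N''
        = gspan o V'' (BplusB F LF) ((Submodule.map π V0 : Submodule o V'') : Set V'') ⊔ N'') := by
  have hBS : ∀ b ∈ BplusB F LF, ∀ s ∈ B0Zb F LF, b * s ∈ BplusB F LF :=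
    fun _ hb _ hs => BplusB_mul_B0Zb_mem hb hs
  obtain ⟨Z, hZ⟩ := exists_ker_le_comap_restrictOutside hBS
    (fun _ hs _ hb => B0Zb_mul_BplusB_mem hs hb) (fun _ hb => mem_BplusB_iff.1 hb)
    eventually_tB_pow_mul_mem_BplusB hP.1 hker
  have hW : ι '' (Submodule.comap ι V0 : Set V') ⊆ V0 := Set.image_preimage_subset ι V0
  have hmap := map_gspan ι hιeq (BplusB F LF) (Submodule.comap ι V0 : Set V')
  have hrange : gspan o V (Set.univ : Set (Bgr F)) (ι '' (Submodule.comap ι V0 : Set V')) =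
      LinearMap.range ι := by
    rw [← map_gspan ι hιeq, hgen0', Submodule.map_top]
  have hkey : gspan o V (BplusB F LF) (V0 : Set V) ⊓ LinearMap.range ι ≤
      Submodule.map ι (gspan o V' (BplusB F LF) (Submodule.comap ι V0 : Set V')) ⊔
        gspan o V (B0Zb F LF : Set (Bgr F)) (Z : Set V) := by
    rw [← hrange, hmap]
    exact gspan_inf_gspan_univ_le hBS hP hZ hW
  have hNst := isStableSub_gspan (o := o) (B0Zb F LF) (Z : Set V)
  have hNfg := isFGOver_gspan (o := o) (B0Zb F LF) Z
  refine ⟨⟨_, hNst, hNfg, hkey⟩, ⟨_, hNst, hNfg, ?_⟩, ⟨⊥, isStableSub_bot _, isFGOver_bot _, ?_⟩⟩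
  · refine le_antisymm (sup_le ?_ le_sup_right) (sup_le (hexact ▸ hkey) le_sup_right)
    rw [← hexact]
    exact le_sup_of_le_left (le_inf (hmap ▸ gspan_mono hW) LinearMap.map_le_range)
  · rw [map_gspan π hπeq, Submodule.map_coe]

/-- For an exact sequence `0 → V' → V → V'' → 0` of smooth
`B`-representations with `V'` of finite type and `V` of finite presentation via `V₀` such
that `V₀' = V₀ ∩ V'` generates `V'`, the intersection `<B⁺V₀> ∩ V'` is contained in
`<B⁺V₀'>` up to a finitely generated `o[B₀Z]`-module; consequently the sequence
`0 → <B⁺V₀'> → <B⁺V₀> → <B⁺V₀''> → 0` is exact modulo finitely generated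
`o[B₀Z]`-modules. -/
theorem statement5
    (o : Type) [CommRing o] [IsNoetherianRing o]
    (F : Type) [Field F] [TopologicalSpace F] [IsTopologicalRing F] (LF : NALF F)
    (V' : Type) [AddCommGroup V'] [Module o V']
    [DistribMulAction (↥(Bgr F)) V'] [SMulCommClass (↥(Bgr F)) o V']
    (hsm' : IsSmoothRep o (↥(Bgr F)) V')
    (V : Type) [AddCommGroup V] [Module o V]
    [DistribMulAction (↥(Bgr F)) V] [SMulCommClass (↥(Bgr F)) o V]
    (hsm : IsSmoothRep o (↥(Bgr F)) V)
    (V'' : Type) [AddCommGroup V''] [Module o V'']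
    [DistribMulAction (↥(Bgr F)) V''] [SMulCommClass (↥(Bgr F)) o V'']
    (hsm'' : IsSmoothRep o (↥(Bgr F)) V'')
    (ι : V' →ₗ[o] V) (hιinj : Function.Injective ⇑ι)
    (hιeq : ∀ (b : ↥(Bgr F)) (v : V'), ι (b • v) = b • ι v)
    (π : V →ₗ[o] V'') (hπsurj : Function.Surjective ⇑π)
    (hπeq : ∀ (b : ↥(Bgr F)) (v : V), π (b • v) = b • π v)
    (hexact : LinearMap.range ι = LinearMap.ker π)
    (hV'ft : ∃ X : Finset V', gspan o V' (Set.univ : Set ↥(Bgr F)) (X : Set V') = ⊤)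
    (V0 : Submodule o V)
    (hst : IsStableSub o V ((B0Zb F LF : Subgroup ↥(Bgr F)) : Set ↥(Bgr F)) V0)
    (hfg : IsFGOver o V ((B0Zb F LF : Subgroup ↥(Bgr F)) : Set ↥(Bgr F)) V0)
    (hgen : gspan o V (Set.univ : Set ↥(Bgr F)) (V0 : Set V) = ⊤)
    (P : Ind o (B0Zb F LF) V0 →ₗ[o] V) (hP : IsPresMap o hst P)
    (hker : IsFGOver o (↥(Ind o (B0Zb F LF) V0)) (Set.univ : Set ↥(Bgr F)) (LinearMap.ker P))
    (hgen0' : gspan o V' (Set.univ : Set ↥(Bgr F)) ((Submodule.comap ι V0 : Submodule o V') : Set V') = ⊤) :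
    (∃ N : Submodule o V,
      IsStableSub o V ((B0Zb F LF : Subgroup ↥(Bgr F)) : Set ↥(Bgr F)) N ∧
      IsFGOver o V ((B0Zb F LF : Subgroup ↥(Bgr F)) : Set ↥(Bgr F)) N ∧
      gspan o V (BplusB F LF) (V0 : Set V) ⊓ LinearMap.range ι ≤
        Submodule.map ι (gspan o V' (BplusB F LF) ((Submodule.comap ι V0 : Submodule o V') : Set V')) ⊔ N) ∧
    (∃ N : Submodule o V,
      IsStableSub o V ((B0Zb F LF : Subgroup ↥(Bgr F)) : Set ↥(Bgr F)) N ∧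
      IsFGOver o V ((B0Zb F LF : Subgroup ↥(Bgr F)) : Set ↥(Bgr F)) N ∧
      Submodule.map ι (gspan o V' (BplusB F LF) ((Submodule.comap ι V0 : Submodule o V') : Set V')) ⊔ N
        = (gspan o V (BplusB F LF) (V0 : Set V) ⊓ LinearMap.ker π) ⊔ N) ∧
    (∃ N'' : Submodule o V'',
      IsStableSub o V'' ((B0Zb F LF : Subgroup ↥(Bgr F)) : Set ↥(Bgr F)) N'' ∧
      IsFGOver o V'' ((B0Zb F LF : Subgroup ↥(Bgr F)) : Set ↥(Bgr F)) N'' ∧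
      Submodule.map π (gspan o V (BplusB F LF) (V0 : Set V)) ⊔ N''
        = gspan o V'' (BplusB F LF) ((Submodule.map π V0 : Submodule o V'') : Set V'') ⊔ N'') :=
  statement5_general o F LF V' V V'' ι hιeq π hπeq hexact V0 hst P hP hker hgen0'
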